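/- arXiv:2101.11657 — 4 statements merged into one kernel-verified Lean document; each statement's English description precedes it below -/
import Mathlib

section
/- Let P be an N×N row-stochastic irreducible matrix with N ≥ 2. Then the pivot denominator ∑_{k=1}^{N−1} p_{N,k} is positive (equivalently p_{N,N} < 1, and the GTH elimination step is well defined), and the eliminated (N−1)×(N−1) matrix P⁽ᴺ⁻¹⁾ with entries p⁽ᴺ⁻¹⁾_{i,j} = p_{i,j} + p_{i,N} p_{N,j} / (∑_{k=1}^{N−1} p_{N,k}) is again irreducible. -/
/-- A square real matrix is row-stochastic if all entries are nonnegative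
and each row sums to 1. -/
def RowStochastic {ι : Type*} [Fintype ι] (P : Matrix ι ι ℝ) : Prop :=
  (∀ i j, 0 ≤ P i j) ∧ ∀ i, ∑ j, P i j = 1

/-- A square matrix is irreducible if for all states `i, j` some power of the matrix
has a positive `(i, j)` entry. -/
def MatIrreducible {ι : Type*} [Fintype ι] [DecidableEq ι] (P : Matrix ι ι ℝ) : Prop :=
  ∀ i j, ∃ k : ℕ, 0 < (P ^ k) i j

/-- One GTH elimination step: eliminate the last state of an `(n+1) × (n+1)` matrix. -/
noncomputable def gthStep {n : ℕ} (P : Matrix (Fin (n + 1)) (Fin (n + 1)) ℝ) :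
    Matrix (Fin n) (Fin n) ℝ :=
  fun i j =>
    P i.castSucc j.castSucc +
      P i.castSucc (Fin.last n) * P (Fin.last n) j.castSucc /
        ∑ k : Fin n, P (Fin.last n) k.castSucc

/-! Positive entries of powers of a nonnegative matrix are paths in its graph of positive
entries. Since the pivot is positive, the eliminated matrix has an edge `i → j` whenever `P` has
the edge `i → j` or the two edges `i → N → j`, so every path of `P` between states other than `N`
shortcuts its visits to `N` and becomes a path of `P⁽ᴺ⁻¹⁾`. The pivot itself is positive because
`N` reaches some other state, so some `p_{N,k}` with `k < N` is positive. -/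

open Relation

namespace Relation.ReflTransGen

variable {α β : Type*} {r : α → α → Prop}

theorem exists_rel_ne {a b : α} (h : ReflTransGen r a b) (hb : b ≠ a) : ∃ c ≠ a, r a c := by
  induction h with
  | refl => exact absurd rfl hb
  | @tail x y _ hxy ih =>
    by_cases hx : x = a
    · exact ⟨y, hb, hx ▸ hxy⟩
    · exact ih hx

theorem eliminate_vertex {v : α} {f : β → α} (hf : Function.Injective f)
    (hv : Set.range f = {v}ᶜ) {a b : β} (h : ReflTransGen r (f a) (f b)) :
    ReflTransGen (fun a b => r (f a) (f b) ∨ r (f a) v ∧ r v (f b)) a b := by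
  have hfv (b : β) : f b ≠ v := by
    simpa [hv] using Set.mem_range_self (f := f) b
  have hpre (x : α) (hx : x ≠ v) : ∃ c, f c = x := (Set.ext_iff.1 hv x).2 hx
  -- Follow the path backwards; while it sits at `v`, remember only the last step `f a → v`.
  suffices key : ∀ x, ReflTransGen r x (f b) →
      ∀ a, f a = x ∨ x = v ∧ r (f a) v →
        ReflTransGen (fun a b => r (f a) (f b) ∨ r (f a) v ∧ r v (f b)) a b from
    key _ h a (.inl rfl)
  intro x hx
  induction hx using head_induction_on with
  | refl =>
    rintro a (ha | ⟨hbv, -⟩)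
    · rw [hf ha]
    · exact absurd hbv (hfv b)
  | @head x y hxy _ ih =>
    intro a ha
    by_cases hy : y = v
    · refine ih a (.inr ⟨hy, ?_⟩)
      rcases ha with rfl | ⟨rfl, hav⟩
      · exact hy ▸ hxy
      · exact hav
    · obtain ⟨c, rfl⟩ := hpre y hy
      refine .head ?_ (ih c (.inl rfl))
      rcases ha with rfl | ⟨rfl, hav⟩
      · exact .inl hxy
      · exact .inr ⟨hav, hxy⟩

end Relation.ReflTransGen

namespace Matrix

variable {ι R : Type*} [Fintype ι] [DecidableEq ι] [Semiring R] [LinearOrder R]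
  [IsStrictOrderedRing R] {A : Matrix ι ι R}

theorem exists_pow_apply_pos_iff_reflTransGen (hA : ∀ i j, 0 ≤ A i j) {i j : ι} :
    (∃ k, 0 < (A ^ k) i j) ↔ ReflTransGen (fun i j => 0 < A i j) i j := by
  have hsum (k : ℕ) (l : ι) :
      0 < (A ^ (k + 1)) i l ↔ ∃ x, 0 < (A ^ k) i x ∧ 0 < A x l := by
    rw [pow_succ, mul_apply, Finset.sum_pos_iff_of_nonneg
      (fun x _ => mul_nonneg (pow_apply_nonneg hA k i x) (hA x l))]
    simp only [Finset.mem_univ, true_and]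
    refine exists_congr fun x => ⟨fun h => ?_, fun h => mul_pos h.1 h.2⟩
    exact (pos_and_pos_or_neg_and_neg_of_mul_pos h).resolve_right
      fun h' => (pow_apply_nonneg hA k i x).not_gt h'.1
  constructor
  · rintro ⟨k, hk⟩
    induction k generalizing j with
    | zero =>
      obtain rfl : i = j := by by_contra h; simp [one_apply_ne h] at hk
      exact .refl
    | succ k ih =>
      obtain ⟨x, hix, hxj⟩ := (hsum k j).1 hk
      exact (ih hix).tail hxj
  · intro h
    induction h with
    | refl => exact ⟨0, by simp⟩
    | tail _ hxy ih =>
      obtain ⟨k, hk⟩ := ih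
      exact ⟨k + 1, (hsum k _).2 ⟨_, hk, hxy⟩⟩

end Matrix

theorem matIrreducible_iff_reflTransGen {ι : Type*} [Fintype ι] [DecidableEq ι]
    {A : Matrix ι ι ℝ} (hA : ∀ i j, 0 ≤ A i j) :
    MatIrreducible A ↔ ∀ i j, ReflTransGen (fun i j => 0 < A i j) i j :=
  forall₂_congr fun _ _ => Matrix.exists_pow_apply_pos_iff_reflTransGen hA

section GTH

variable {n : ℕ} {P : Matrix (Fin (n + 1)) (Fin (n + 1)) ℝ}

theorem gthStep_nonneg (hP : ∀ i j, 0 ≤ P i j) (i j : Fin n) : 0 ≤ gthStep P i j :=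
  add_nonneg (hP _ _) (div_nonneg (mul_nonneg (hP _ _) (hP _ _))
    (Finset.sum_nonneg fun _ _ => hP _ _))

theorem gthStep_pos (hP : ∀ i j, 0 ≤ P i j) (hpivot : 0 < ∑ k : Fin n, P (Fin.last n) k.castSucc)
    {i j : Fin n} (h : 0 < P i.castSucc j.castSucc ∨
      0 < P i.castSucc (Fin.last n) ∧ 0 < P (Fin.last n) j.castSucc) :
    0 < gthStep P i j := by
  rcases h with h | ⟨hin, hnj⟩
  · exact add_pos_of_pos_of_nonneg h (div_nonneg (mul_nonneg (hP _ _) (hP _ _)) hpivot.le)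
  · exact add_pos_of_nonneg_of_pos (hP _ _) (div_pos (mul_pos hin hnj) hpivot)

end GTH

theorem range_castSucc_eq_compl_last (n : ℕ) :
    Set.range (Fin.castSucc : Fin n → Fin (n + 1)) = {Fin.last n}ᶜ :=
  Set.ext fun _ => Fin.exists_castSucc_eq

/-- For an irreducible row-stochastic matrix of size at least 2, the GTH pivot denominator
is positive (equivalently `p_{N,N} < 1`, so the elimination step is well defined), and the
eliminated matrix is again irreducible. -/
theorem gthStep_irreducible {n : ℕ} (hn : 1 ≤ n)
    (P : Matrix (Fin (n + 1)) (Fin (n + 1)) ℝ) (hP : RowStochastic P)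
    (hirr : MatIrreducible P) :
    0 < ∑ k : Fin n, P (Fin.last n) k.castSucc ∧
      P (Fin.last n) (Fin.last n) < 1 ∧
      MatIrreducible (gthStep P) := by
  obtain ⟨hnn, hrow⟩ := hP
  have hpath := (matIrreducible_iff_reflTransGen hnn).1 hirr
  have hpivot : 0 < ∑ k : Fin n, P (Fin.last n) k.castSucc := by
    obtain ⟨c, hc, hlast⟩ :=
      (hpath (Fin.last n) (Fin.castSucc ⟨0, hn⟩)).exists_rel_ne (Fin.castSucc_ne_last _)
    obtain ⟨c, rfl⟩ := Fin.exists_castSucc_eq.2 hc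
    exact Finset.sum_pos' (fun _ _ => hnn _ _) ⟨c, Finset.mem_univ _, hlast⟩
  refine ⟨hpivot, ?_, ?_⟩
  · have hlast_row := hrow (Fin.last n)
    rw [Fin.sum_univ_castSucc] at hlast_row
    linarith
  · rw [matIrreducible_iff_reflTransGen (gthStep_nonneg hnn)]
    intro i j
    exact ReflTransGen.mono (fun _ _ => gthStep_pos hnn hpivot) _ _
      ((hpath _ _).eliminate_vertex (Fin.castSucc_injective n) (range_castSucc_eq_compl_last n))
end

section
/- Let P be an N×N row-stochastic irreducible matrix, let π be a stationary probability vector of P (π = πP, entries nonnegative, summing to 1), and let the GTH recursion matrices P⁽ⁿ⁾ be well defined (each denominator ∑_{k=1}^{n−1} p⁽ⁿ⁾_{n,k} positive for 2 ≤ n ≤ N). Then π_1 > 0 and the ratios r_j := π_j / π_1 satisfy the GTH back-substitution recursion: r_1 = 1 and, for every 2 ≤ j ≤ N, r_j · (∑_{k=1}^{j−1} p⁽ʲ⁾_{j,k}) = ∑_{i=1}^{j−1} r_i p⁽ʲ⁾_{i,j}. -/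
/-- The GTH (censoring) recursion: `gthFam P N = P` and
`gthFam P (n-1) = gthStep (gthFam P n)`, i.e. the matrices `P⁽ⁿ⁾` of the GTH algorithm
(states `1, …, n` correspond to the indices of `Fin n`). -/
noncomputable def gthFam : {N : ℕ} → Matrix (Fin N) (Fin N) ℝ → (n : ℕ) →
    Matrix (Fin n) (Fin n) ℝ
  | 0, _, _ => 0
  | M + 1, P, n =>
    if h : n = M + 1 then (by subst h; exact P) else gthFam (gthStep P) n

/-!
Censoring the last state of a chain keeps it stochastic and keeps the restriction of a
stationary vector stationary: in `gthStep` the mass that would flow into the last state is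
redistributed according to that state's exit probabilities. Hence `π` restricted to states
`1, …, j` is stationary for `P⁽ʲ⁾`, and the balance equation at the last state `j` of `P⁽ʲ⁾`
is the back-substitution identity. Irreducibility makes every entry of `π` positive, since
`π = π Pᵏ`.
-/

open Finset Matrix

lemma Matrix.vecMul_pow_eq_self {ι α : Type*} [Fintype ι] [DecidableEq ι] [Semiring α]
    {M : Matrix ι ι α} {v : ι → α} (hv : v ᵥ* M = v) (k : ℕ) : v ᵥ* M ^ k = v := by
  induction k with
  | zero => exact vecMul_one v
  | succ k ih => rw [pow_succ, ← vecMul_vecMul, ih, hv]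

lemma pos_of_vecMul_eq_self {ι : Type*} [Fintype ι] [DecidableEq ι] {P : Matrix ι ι ℝ}
    (hP : ∀ i j, 0 ≤ P i j) (hirr : MatIrreducible P) {π : ι → ℝ} (hπ : π ᵥ* P = π)
    (hnn : ∀ j, 0 ≤ π j) (hne : π ≠ 0) (j : ι) : 0 < π j := by
  obtain ⟨i, hi⟩ := Function.ne_iff.mp hne
  obtain ⟨k, hk⟩ := hirr i j
  calc 0 < π i * (P ^ k) i j := mul_pos ((hnn i).lt_of_ne' hi) hk
    _ ≤ ∑ l, π l * (P ^ k) l j :=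
      single_le_sum (fun l _ => mul_nonneg (hnn l) (pow_apply_nonneg hP k l j)) (mem_univ i)
    _ = π j := congrFun (vecMul_pow_eq_self hπ k) j

lemma gthFam_self {N : ℕ} (P : Matrix (Fin N) (Fin N) ℝ) : gthFam P N = P := by
  cases N with
  | zero => ext i; exact i.elim0
  | succ M => simp [gthFam]

lemma gthFam_of_ne {M : ℕ} (P : Matrix (Fin (M + 1)) (Fin (M + 1)) ℝ) {n : ℕ}
    (hn : n ≠ M + 1) : gthFam P n = gthFam (gthStep P) n := by
  rw [gthFam, dif_neg hn]

lemma gthFam_eq_gthStep : ∀ {N : ℕ} (P : Matrix (Fin N) (Fin N) ℝ) {n : ℕ}, n + 1 ≤ N →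
    gthFam P n = gthStep (gthFam P (n + 1))
  | 0, _, _, h => by omega
  | M + 1, P, n, h => by
    rw [gthFam_of_ne P (by omega)]
    obtain rfl | hn := eq_or_ne n M
    · rw [gthFam_self, gthFam_self]
    · rw [gthFam_of_ne P (n := n + 1) (by omega), gthFam_eq_gthStep _ (by omega)]

section gthStep

variable {n : ℕ} {Q : Matrix (Fin (n + 1)) (Fin (n + 1)) ℝ}

lemma last_mul_sum_eq_of_vecMul_eq_self {ρ : Fin (n + 1) → ℝ} (hρ : ρ ᵥ* Q = ρ)
    (hlast : ∑ j, Q (Fin.last n) j = 1) :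
    ρ (Fin.last n) * ∑ k : Fin n, Q (Fin.last n) k.castSucc =
      ∑ i : Fin n, ρ i.castSucc * Q i.castSucc (Fin.last n) := by
  have hbalance := congrFun hρ (Fin.last n)
  simp only [vecMul, dotProduct, Fin.sum_univ_castSucc] at hbalance
  rw [Fin.sum_univ_castSucc] at hlast
  linear_combination ρ (Fin.last n) * hlast - hbalance

lemma sum_gthStep_row (hrow : ∀ i, ∑ j, Q i j = 1)
    (hS : ∑ k : Fin n, Q (Fin.last n) k.castSucc ≠ 0) (i : Fin n) :
    ∑ j, gthStep Q i j = 1 := by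
  have hi := hrow i.castSucc
  rw [Fin.sum_univ_castSucc] at hi
  simp only [gthStep, sum_add_distrib, mul_div_assoc, ← mul_sum, ← sum_div, div_self hS,
    mul_one]
  linarith

lemma vecMul_gthStep {ρ : Fin (n + 1) → ℝ} (hρ : ρ ᵥ* Q = ρ)
    (hlast : ∑ j, Q (Fin.last n) j = 1) (hS : ∑ k : Fin n, Q (Fin.last n) k.castSucc ≠ 0) :
    (ρ ∘ Fin.castSucc) ᵥ* gthStep Q = ρ ∘ Fin.castSucc := by
  funext j
  have hbalance := congrFun hρ j.castSucc
  simp only [vecMul, dotProduct, Fin.sum_univ_castSucc] at hbalance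
  have hredistributed : ∑ i : Fin n, ρ i.castSucc * (Q i.castSucc (Fin.last n) *
        Q (Fin.last n) j.castSucc / ∑ k : Fin n, Q (Fin.last n) k.castSucc) =
      ρ (Fin.last n) * Q (Fin.last n) j.castSucc := by
    rw [← mul_div_cancel_right₀ (ρ (Fin.last n) * Q (Fin.last n) j.castSucc) hS,
      mul_right_comm, last_mul_sum_eq_of_vecMul_eq_self hρ hlast, sum_mul, sum_div]
    exact sum_congr rfl fun i _ => by ring
  simp only [vecMul, dotProduct, Function.comp_apply, gthStep, mul_add, sum_add_distrib,
    hredistributed]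
  exact hbalance

end gthStep

lemma gthFam_sum_row_and_vecMul {N : ℕ} {P : Matrix (Fin N) (Fin N) ℝ}
    (hrow : ∀ i, ∑ j, P i j = 1) {π : Fin N → ℝ} (hπ : π ᵥ* P = π)
    (hden : ∀ m : ℕ, 1 ≤ m → m + 1 ≤ N →
      ∑ k : Fin m, gthFam P (m + 1) (Fin.last m) k.castSucc ≠ 0)
    {n : ℕ} (hn : n ≤ N) :
    (∀ i, ∑ j, gthFam P n i j = 1) ∧
      (π ∘ Fin.castLE hn) ᵥ* gthFam P n = π ∘ Fin.castLE hn := by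
  induction hn using Nat.decreasingInduction with
  | self => rw [gthFam_self]; exact ⟨hrow, hπ⟩
  | of_succ k hk ih =>
    cases k with
    | zero => exact ⟨fun i => i.elim0, funext fun j => j.elim0⟩
    | succ m =>
      obtain ⟨hrow', hπ'⟩ := ih
      have hS := hden (m + 1) (by omega) hk
      rw [gthFam_eq_gthStep P hk]
      exact ⟨sum_gthStep_row hrow' hS, vecMul_gthStep hπ' (hrow' _) hS⟩

/-- For an irreducible row-stochastic matrix with stationary probability vector `π`
and well-defined GTH recursion, `π_1 > 0` and the ratios `r_j = π_j / π_1` satisfy the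
GTH back-substitution recursion `r_j ⬝ S_j = ∑_{i<j} r_i p⁽ʲ⁾_{i,j}`. -/
theorem gth_back_substitution_ratios {N : ℕ} (h0 : 0 < N)
    (P : Matrix (Fin N) (Fin N) ℝ) (hP : RowStochastic P) (hirr : MatIrreducible P)
    (π : Fin N → ℝ) (hnn : ∀ j, 0 ≤ π j) (hsum : ∑ j, π j = 1)
    (hstat : ∀ j, π j = ∑ i, π i * P i j)
    (hden : ∀ m : ℕ, 1 ≤ m → m + 1 ≤ N →
      0 < ∑ k : Fin m, gthFam P (m + 1) (Fin.last m) k.castSucc) :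
    0 < π ⟨0, h0⟩ ∧
      π ⟨0, h0⟩ / π ⟨0, h0⟩ = 1 ∧
      ∀ (m : ℕ), 1 ≤ m → ∀ (h2 : m + 1 ≤ N),
        π (Fin.castLE h2 (Fin.last m)) / π ⟨0, h0⟩ *
            ∑ k : Fin m, gthFam P (m + 1) (Fin.last m) k.castSucc =
          ∑ i : Fin m, π (Fin.castLE h2 i.castSucc) / π ⟨0, h0⟩ *
            gthFam P (m + 1) i.castSucc (Fin.last m) := by
  have hπ : π ᵥ* P = π := funext fun j => (hstat j).symm
  have hne : π ≠ 0 := by rintro rfl; simp at hsum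
  have hπ0 := pos_of_vecMul_eq_self hP.1 hirr hπ hnn hne ⟨0, h0⟩
  refine ⟨hπ0, div_self hπ0.ne', fun m _ h2 => ?_⟩
  obtain ⟨hrow, hπm⟩ :=
    gthFam_sum_row_and_vecMul hP.2 hπ (fun m hm h => (hden m hm h).ne') h2
  have hback := last_mul_sum_eq_of_vecMul_eq_self hπm (hrow (Fin.last m))
  simp only [Function.comp_apply] at hback
  simp only [div_mul_eq_mul_div, ← sum_div, hback]
end

section
/- Let P be an N×N row-stochastic irreducible matrix with stationary probability vector π (π = πP, entries nonnegative, summing to 1), and let E ⊆ Fin N be nonempty with nonempty complement, with blocks T, U, D, Q of P with respect to E and Eᶜ, so that I − Q is invertible and P^E = T + U (I − Q)⁻¹ D. Then s := ∑_{k ∈ E} π_k > 0, and the vector π^E defined on E by π^E_j = π_j / s is a stationary probability vector of the censored matrix: π^E = π^E P^E and ∑_{j ∈ E} π^E_j = 1. -/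
/-!
Stationarity of `π` propagates positivity along the positive entries of `P`, so by
irreducibility every `π j` is positive. If `(I - Q) v = 0`, the extension of `v` by zero on `E`
is `P`-harmonic off `E`; the set where `|v|` is maximal is then closed under positive steps, so
it reaches `E` and `v = 0`. Finally, splitting `π = π P` into blocks gives
`π_{Eᶜ} (I - Q) = π_E U`, and substituting `π_{Eᶜ} = π_E U (I - Q)⁻¹` into
`π_E = π_E T + π_{Eᶜ} D` yields `π_E P^E = π_E`.
-/

open Matrix Finset

section

variable {ι : Type*} [Fintype ι] [DecidableEq ι] {P : Matrix ι ι ℝ}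

lemma mem_of_pow_apply_pos {S : Set ι} (hP : ∀ i j, 0 ≤ P i j)
    (hS : ∀ i ∈ S, ∀ j, 0 < P i j → j ∈ S) {i : ι} (hi : i ∈ S) :
    ∀ k j, 0 < (P ^ k) i j → j ∈ S := by
  intro k
  induction k with
  | zero =>
    intro j hj
    obtain rfl : i = j := by
      by_contra h
      simp [one_apply_ne h] at hj
    exact hi
  | succ k ih =>
    intro j hj
    rw [pow_succ, mul_apply] at hj
    obtain ⟨l, -, hl⟩ := (sum_pos_iff_of_nonneg fun l _ =>
      mul_nonneg (pow_apply_nonneg hP k i l) (hP l j)).1 hj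
    exact hS l (ih l (pos_of_mul_pos_left hl (hP l j))) j
      (pos_of_mul_pos_right hl (pow_apply_nonneg hP k i l))

lemma MatIrreducible.mem_of_closed (hirr : MatIrreducible P) (hP : ∀ i j, 0 ≤ P i j)
    {S : Set ι} (hS : ∀ i ∈ S, ∀ j, 0 < P i j → j ∈ S) {i : ι} (hi : i ∈ S) (j : ι) :
    j ∈ S :=
  let ⟨k, hk⟩ := hirr i j
  mem_of_pow_apply_pos hP hS hi k j hk

lemma MatIrreducible.pos_of_vecMul_eq (hirr : MatIrreducible P) (hP : ∀ i j, 0 ≤ P i j)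
    {π : ι → ℝ} (hnn : ∀ j, 0 ≤ π j) (hne : π ≠ 0) (hstat : π ᵥ* P = π) (j : ι) :
    0 < π j := by
  obtain ⟨i, hi⟩ := Function.ne_iff.1 hne
  refine hirr.mem_of_closed hP (S := {j | 0 < π j}) (fun i hi j hij => ?_)
    ((hnn i).lt_of_ne' hi) j
  calc 0 < π i * P i j := mul_pos hi hij
    _ ≤ ∑ l, π l * P l j :=
      single_le_sum (fun l _ => mul_nonneg (hnn l) (hP l j)) (mem_univ i)
    _ = π j := congrFun hstat j

omit [DecidableEq ι] in
lemma RowStochastic.abs_eq_of_harmonic_at (hP : RowStochastic P) {w : ι → ℝ} {m : ℝ}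
    (hm : ∀ l, |w l| ≤ m) {i : ι} (hi : |w i| = m) (hw : w i = ∑ l, P i l * w l) {j : ι}
    (hij : 0 < P i j) : |w j| = m := by
  have hgap : ∀ l ∈ univ, 0 ≤ P i l * (m - |w l|) :=
    fun l _ => mul_nonneg (hP.1 i l) (sub_nonneg.2 (hm l))
  have hzero : ∑ l, P i l * (m - |w l|) = 0 := by
    refine le_antisymm ?_ (sum_nonneg hgap)
    calc ∑ l, P i l * (m - |w l|) = |∑ l, P i l * w l| - ∑ l, |P i l * w l| := by
          simp [mul_sub, sum_sub_distrib, ← sum_mul, hP.2 i, ← hw, hi, abs_mul,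
            abs_of_nonneg (hP.1 i _)]
      _ ≤ 0 := sub_nonpos.2 (abs_sum_le_sum_abs _ _)
  have := (sum_eq_zero_iff_of_nonneg hgap).1 hzero j (mem_univ j)
  rcases mul_eq_zero.1 this with h | h
  · exact absurd h hij.ne'
  · linarith

lemma MatIrreducible.eq_zero_of_harmonic_off (hirr : MatIrreducible P) (hP : RowStochastic P)
    {E : Finset ι} (hE : E.Nonempty) {w : ι → ℝ} (hwE : ∀ i ∈ E, w i = 0)
    (hharm : ∀ i ∉ E, w i = ∑ j, P i j * w j) : w = 0 := by
  obtain ⟨e, he⟩ := hE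
  have : Nonempty ι := ⟨e⟩
  obtain ⟨i₀, hmax⟩ := Finite.exists_max fun i => |w i|
  suffices h : |w i₀| = 0 from funext fun i => abs_nonpos_iff.1 (h ▸ hmax i)
  by_contra hm
  have hclosed : ∀ i ∈ {i | |w i| = |w i₀|}, ∀ j, 0 < P i j → j ∈ {i | |w i| = |w i₀|} := by
    intro i hi j hij
    have hiE : i ∉ E := fun hiE => hm (by rw [← Set.mem_ofPred.1 hi, hwE i hiE, abs_zero])
    exact hP.abs_eq_of_harmonic_at hmax hi (hharm i hiE) hij
  have he₀ : |w e| = |w i₀| := hirr.mem_of_closed hP.1 hclosed rfl e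
  exact hm (by rw [← he₀, hwE e he, abs_zero])

lemma MatIrreducible.isUnit_one_sub_toBlock_compl (hirr : MatIrreducible P)
    (hP : RowStochastic P) {E : Finset ι} (hE : E.Nonempty) :
    IsUnit (1 - P.toBlock (· ∉ E) (· ∉ E)) := by
  rw [isUnit_iff_isUnit_det, isUnit_iff_ne_zero]
  intro hdet
  obtain ⟨v, hv0, hv⟩ := exists_mulVec_eq_zero_iff.2 hdet
  let w : ι → ℝ := fun i => if h : i ∈ E then 0 else v ⟨i, h⟩
  have hharm : ∀ i ∉ E, w i = ∑ j, P i j * w j := by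
    intro i hi
    rw [sub_mulVec, one_mulVec, sub_eq_zero] at hv
    rw [← Fintype.sum_subtype_add_sum_subtype (· ∈ E)]
    simpa [w, hi, mulVec, dotProduct, toBlock_apply, fun j : {a // a ∉ E} => j.2]
      using congrFun hv ⟨i, hi⟩
  have hw : w = 0 := hirr.eq_zero_of_harmonic_off hP hE (fun i hi => dif_pos hi) hharm
  exact hv0 (funext fun i => by simpa [w, i.2] using congrFun hw i)

end

namespace Matrix

variable {ι R : Type*} [Fintype ι] [DecidableEq ι] [CommRing R]

/-- `P^E = T + U (I - Q)⁻¹ D`. -/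
noncomputable def censor (P : Matrix ι ι R) (E : Finset ι) : Matrix {a // a ∈ E} {a // a ∈ E} R :=
  P.toBlock (· ∈ E) (· ∈ E) +
    P.toBlock (· ∈ E) (· ∉ E) * (1 - P.toBlock (· ∉ E) (· ∉ E))⁻¹ * P.toBlock (· ∉ E) (· ∈ E)

lemma vecMul_apply_eq_toBlock_add (P : Matrix ι ι R) (E : Finset ι) (π : ι → R) (q : ι → Prop)
    (j : {a // q a}) :
    (π ᵥ* P) j = ((fun i : {a // a ∈ E} => π i) ᵥ* P.toBlock (· ∈ E) q +
      (fun i : {a // a ∉ E} => π i) ᵥ* P.toBlock (· ∉ E) q) j := by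
  simp only [Pi.add_apply, vecMul, dotProduct, toBlock_apply]
  convert (Fintype.sum_subtype_add_sum_subtype (· ∈ E) fun i => π i * P i j).symm

lemma vecMul_censor {P : Matrix ι ι R} {E : Finset ι} {π : ι → R} (hπ : π ᵥ* P = π)
    (hQ : IsUnit (1 - P.toBlock (· ∉ E) (· ∉ E))) :
    (fun i : {a // a ∈ E} => π i) ᵥ* P.censor E = fun i : {a // a ∈ E} => π i := by
  set α := fun i : {a // a ∈ E} => π i
  set β := fun i : {a // a ∉ E} => π i
  have hE : α = α ᵥ* P.toBlock (· ∈ E) (· ∈ E) + β ᵥ* P.toBlock (· ∉ E) (· ∈ E) :=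
    funext fun j => by rw [← vecMul_apply_eq_toBlock_add, hπ]
  have hEc : β = α ᵥ* P.toBlock (· ∈ E) (· ∉ E) + β ᵥ* P.toBlock (· ∉ E) (· ∉ E) :=
    funext fun j => by rw [← vecMul_apply_eq_toBlock_add, hπ]
  have hβ : β = (α ᵥ* P.toBlock (· ∈ E) (· ∉ E)) ᵥ* (1 - P.toBlock (· ∉ E) (· ∉ E))⁻¹ :=
    calc β = β ᵥ* ((1 - P.toBlock (· ∉ E) (· ∉ E)) * (1 - P.toBlock (· ∉ E) (· ∉ E))⁻¹) := by
          rw [mul_nonsing_inv _ ((isUnit_iff_isUnit_det _).1 hQ), vecMul_one]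
      _ = _ := by rw [← vecMul_vecMul, vecMul_sub, vecMul_one, eq_sub_of_add_eq hEc.symm]
  rw [censor, vecMul_add, ← vecMul_vecMul, ← vecMul_vecMul, ← hβ, ← hE]

end Matrix

theorem censored_stationary_general {N : ℕ}
    (P : Matrix (Fin N) (Fin N) ℝ) (hP : RowStochastic P) (hirr : MatIrreducible P)
    (π : Fin N → ℝ) (hnn : ∀ j, 0 ≤ π j) (hsum : ∑ j, π j = 1)
    (hstat : ∀ j, π j = ∑ i, π i * P i j)
    (E : Finset (Fin N)) (hE : E.Nonempty) :
    IsUnit (1 - P.toBlock (· ∉ E) (· ∉ E)) ∧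
      0 < ∑ k ∈ E, π k ∧
      (∑ j : {a // a ∈ E}, π ↑j / ∑ k ∈ E, π k) = 1 ∧
      ∀ j : {a // a ∈ E},
        π ↑j / (∑ k ∈ E, π k) =
          ∑ i : {a // a ∈ E},
            (π ↑i / ∑ k ∈ E, π k) *
              (P.toBlock (· ∈ E) (· ∈ E) +
                P.toBlock (· ∈ E) (· ∉ E) * (1 - P.toBlock (· ∉ E) (· ∉ E))⁻¹ *
                  P.toBlock (· ∉ E) (· ∈ E)) i j := by
  have hπ : π ᵥ* P = π := funext fun j => (hstat j).symm
  have hpos := hirr.pos_of_vecMul_eq hP.1 hnn (by rintro rfl; simp at hsum) hπ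
  have hs : 0 < ∑ k ∈ E, π k := sum_pos (fun k _ => hpos k) hE
  have hQ := hirr.isUnit_one_sub_toBlock_compl hP hE
  refine ⟨hQ, hs, ?_, fun j => ?_⟩
  · rw [← sum_div, sum_coe_sort E π, div_self hs.ne']
  · rw [← congrFun (vecMul_censor hπ hQ) j, vecMul, dotProduct, sum_div]
    simp only [censor, div_mul_eq_mul_div]

/-- Stationary vector of the finite censored chain: if `π` is a stationary probability
vector of the irreducible row-stochastic matrix `P` and `E` is a nonempty censoring set
with nonempty complement, then `I - Q` is invertible, `s = ∑_{k ∈ E} π_k > 0`, and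
`π^E = (π_j / s)_{j ∈ E}` is a stationary probability vector of the censored matrix
`P^E = T + U (I - Q)⁻¹ D`. -/
theorem censored_stationary {N : ℕ}
    (P : Matrix (Fin N) (Fin N) ℝ) (hP : RowStochastic P) (hirr : MatIrreducible P)
    (π : Fin N → ℝ) (hnn : ∀ j, 0 ≤ π j) (hsum : ∑ j, π j = 1)
    (hstat : ∀ j, π j = ∑ i, π i * P i j)
    (E : Finset (Fin N)) (hE : E.Nonempty) (hEc : Eᶜ.Nonempty) :
    IsUnit (1 - P.toBlock (· ∉ E) (· ∉ E)) ∧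
      0 < ∑ k ∈ E, π k ∧
      (∑ j : {a // a ∈ E}, π ↑j / ∑ k ∈ E, π k) = 1 ∧
      ∀ j : {a // a ∈ E},
        π ↑j / (∑ k ∈ E, π k) =
          ∑ i : {a // a ∈ E},
            (π ↑i / ∑ k ∈ E, π k) *
              (P.toBlock (· ∈ E) (· ∈ E) +
                P.toBlock (· ∈ E) (· ∉ E) * (1 - P.toBlock (· ∉ E) (· ∉ E))⁻¹ *
                  P.toBlock (· ∉ E) (· ∈ E)) i j :=
  censored_stationary_general P hP hirr π hnn hsum hstat E hE
end

section
/- (Invariance of the R-measure under censoring.) Let P : ℕ → ℕ → ℝ≥0∞ be row-stochastic, and for m ≥ 1 let E_m = {1, 2, …, m}. For states 1 ≤ i ≤ j, the R-measure of a transition function M on a set containing E_j is defined by r_{i,j}(M) := (M^{E_j})_{i,j} / (1 − (M^{E_j})_{j,j}) if i < j, and r_{j,j}(M) := 1 / (1 − (M^{E_j})_{j,j}). Then for all 1 ≤ i ≤ j ≤ n, the R-measure computed from the censored chain P^{E_n} agrees with that of P: r_{i,j}(P^{E_n}) = r_{i,j}(P). -/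
open scoped ENNReal

/-- The censored (taboo-path) transition probability. -/
noncomputable def censored {α : Type*} (P : α → α → ℝ≥0∞) (E : Set α) (i j : α) : ℝ≥0∞ :=
  P i j + ∑' (n : ℕ), ∑' (w : Fin (n + 1) → ↥Eᶜ),
    P i ↑(w 0) * (∏ k : Fin n, P ↑(w k.castSucc) ↑(w k.succ)) * P ↑(w (Fin.last n)) j

/-- A countable-state transition function is row-stochastic if each row sums to 1. -/
def RowStoch (P : ℕ → ℕ → ℝ≥0∞) : Prop := ∀ i, ∑' j, P i j = 1

open Classical in
/-- The R-measure of a transition function `M` relative to the censoring set `E` (playing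
the role of `E_j = {1, …, j}`): `r_{i,j} = (M^{E})_{i,j} / (1 - (M^{E})_{j,j})` for
`i ≠ j`, and `r_{j,j} = 1 / (1 - (M^{E})_{j,j})`. -/
noncomputable def rMeasure {α : Type*} (M : α → α → ℝ≥0∞) (E : Set α) (i j : α) : ℝ≥0∞ :=
  if i = j then 1 / (1 - censored M E j j)
  else censored M E i j / (1 - censored M E j j)

/-!
Write `P^E i j` as the sum of the weights `P i x₁ * P x₁ x₂ * ⋯ * P xₖ j` over all finite
lists `x₁ ⋯ xₖ` of states outside `E`. For `F ⊆ A`, a list avoiding `F` is cut by its visits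
`d₁, …, dₘ` to `A` (necessarily in `A \ F`) into blocks avoiding `A`, and it is determined by
the list `d₁ ⋯ dₘ` together with the blocks. Summing over the blocks with the `dᵢ` fixed turns
each block into an entry of `P^A`, so `(P^A)^F = P^F` on `A`; the R-measure only depends on
the censored chain.
-/

variable {α β : Type*}

noncomputable def pathWeight (P : α → α → ℝ≥0∞) : α → List α → α → ℝ≥0∞
  | i, [], j => P i j
  | i, a :: l, j => P i a * pathWeight P a l j

theorem pathWeight_append_cons (P : α → α → ℝ≥0∞) (i x j : α) (l₁ l₂ : List α) :
    pathWeight P i (l₁ ++ x :: l₂) j = pathWeight P i l₁ x * pathWeight P x l₂ j := by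
  induction l₁ generalizing i with
  | nil => rfl
  | cons a l₁ ih => simp only [List.cons_append, pathWeight, ih, mul_assoc]

theorem pathWeight_comp (P : α → α → ℝ≥0∞) (e : β → α) (i j : β) (l : List β) :
    pathWeight (fun a b => P (e a) (e b)) i l j = pathWeight P (e i) (l.map e) (e j) := by
  induction l generalizing i with
  | nil => rfl
  | cons a l ih => simp only [List.map_cons, pathWeight, ih]

theorem pathWeight_ofFn (P : α → α → ℝ≥0∞) (i j : α) {n : ℕ} (w : Fin (n + 1) → α) :
    pathWeight P i (List.ofFn w) j =
      P i (w 0) * (∏ k : Fin n, P (w k.castSucc) (w k.succ)) * P (w (Fin.last n)) j := by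
  induction n generalizing i with
  | zero => simp [pathWeight]
  | succ n ih =>
    rw [List.ofFn_succ, pathWeight, ih, Fin.prod_univ_succ]
    simp only [Fin.succ_castSucc, Fin.succ_last, Fin.castSucc_zero]
    ring

theorem tsum_list_map_of_injective {e : β → α} (he : e.Injective) (f : List α → ℝ≥0∞) :
    ∑' l : List β, f (l.map e) = ∑' l : {l : List α // ∀ x ∈ l, x ∈ Set.range e}, f l := by
  rw [← tsum_range f (List.map_injective_iff.mpr he), Set.range_list_map]
  rfl

theorem censored_eq_tsum_list (P : α → α → ℝ≥0∞) (E : Set α) (i j : α) :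
    censored P E i j = ∑' l : List ↥Eᶜ, pathWeight P i (l.map (↑)) j := by
  rw [← List.equivSigmaTuple.symm.tsum_eq, ENNReal.tsum_sigma',
    tsum_eq_zero_add' ENNReal.summable, censored]
  congr 1
  · simp [List.equivSigmaTuple, pathWeight]
  · refine tsum_congr fun n => tsum_congr fun w => ?_
    simp only [List.equivSigmaTuple_symm_apply, List.map_ofFn, pathWeight_ofFn]
    rfl

theorem censored_eq_tsum_avoiding (P : α → α → ℝ≥0∞) (E : Set α) (i j : α) :
    censored P E i j = ∑' l : {l : List α // ∀ x ∈ l, x ∉ E}, pathWeight P i l j := by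
  rw [censored_eq_tsum_list,
    tsum_list_map_of_injective Subtype.val_injective (fun l => pathWeight P i l j),
    Subtype.range_coe]
  rfl

section Fibers

variable (A : Set α) [DecidablePred (· ∈ A)]

noncomputable def filterFiberConsEquiv {d : α} (hd : d ∈ A) (L : List α) :
    {c : List α // c.filter (· ∈ A) = []} × {l : List α // l.filter (· ∈ A) = L} ≃
      {l : List α // l.filter (· ∈ A) = d :: L} :=
  Equiv.ofBijective
    (fun p => ⟨p.1.1 ++ d :: p.2.1, by simp [List.filter_append, p.1.2, p.2.2, hd]⟩)
    (by
      have prefix_eq (c l : List α) (hc : c.filter (· ∈ A) = []) :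
          (c ++ d :: l).takeWhile (fun x => !decide (x ∈ A)) = c := by
        rw [List.takeWhile_append_of_pos (by simpa [List.filter_eq_nil_iff] using hc)]
        simp [hd]
      constructor
      · rintro ⟨⟨c, hc⟩, ⟨l, hl⟩⟩ ⟨⟨c', hc'⟩, ⟨l', hl'⟩⟩ h
        have h := Subtype.mk.inj h
        obtain rfl : c = c' := by
          rw [← prefix_eq c l hc, ← prefix_eq c' l' hc', h]
        simpa using h
      · rintro ⟨l, hl⟩
        obtain ⟨c, l', rfl, hc, -, hl'⟩ := List.filter_eq_cons_iff.mp hl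
        exact ⟨(⟨c, List.filter_eq_nil_iff.mpr hc⟩, ⟨l', hl'⟩), rfl⟩)

theorem tsum_filter_eq_nil (P : α → α → ℝ≥0∞) (i j : α) :
    ∑' c : {c : List α // c.filter (· ∈ A) = []}, pathWeight P i c j = censored P A i j := by
  rw [censored_eq_tsum_avoiding]
  exact (Equiv.subtypeEquivRight (q := fun l : List α => ∀ x ∈ l, x ∉ A)
    fun l => by simp [List.filter_eq_nil_iff]).tsum_eq (fun l => pathWeight P i l.1 j)

theorem tsum_filter_fiber (P : α → α → ℝ≥0∞) (i j : α) (L : List α) (hL : ∀ x ∈ L, x ∈ A) :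
    ∑' l : {l : List α // l.filter (· ∈ A) = L}, pathWeight P i l j =
      pathWeight (censored P A) i L j := by
  induction L generalizing i with
  | nil => exact tsum_filter_eq_nil A P i j
  | cons d L ih =>
    have hd : d ∈ A := hL d List.mem_cons_self
    rw [← (filterFiberConsEquiv A hd L).tsum_eq, ENNReal.tsum_prod', pathWeight,
      ← ih d fun x hx => hL x (List.mem_cons_of_mem d hx), ← tsum_filter_eq_nil A P i d,
      ← ENNReal.tsum_mul_right]
    refine tsum_congr fun c => ?_
    rw [← ENNReal.tsum_mul_left]
    exact tsum_congr fun l => pathWeight_append_cons P i d j c l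

end Fibers

section Transitivity

variable {A F : Set α}

def sigmaFilterFiberEquiv [DecidablePred (· ∈ A)] (hFA : F ⊆ A) :
    (Σ L : {L : List α // ∀ x ∈ L, x ∈ A \ F}, {l : List α // l.filter (· ∈ A) = L}) ≃
      {l : List α // ∀ x ∈ l, x ∉ F} where
  toFun σ := ⟨σ.2, fun x hx hxF => by
    have hxL : x ∈ σ.1.1 := σ.2.2 ▸ List.mem_filter.mpr ⟨hx, by simpa using hFA hxF⟩
    exact (σ.1.2 x hxL).2 hxF⟩
  invFun l := ⟨⟨l.1.filter (· ∈ A), fun x hx => by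
    obtain ⟨hxl, hxA⟩ := List.mem_filter.mp hx
    exact ⟨by simpa using hxA, l.2 x hxl⟩⟩, ⟨l, rfl⟩⟩
  left_inv := by
    rintro ⟨⟨L, hL⟩, ⟨l, hl⟩⟩
    obtain rfl : l.filter (· ∈ A) = L := hl
    rfl
  right_inv _ := rfl

theorem censored_censored (P : α → α → ℝ≥0∞) (hFA : F ⊆ A) {i j : α} (hi : i ∈ A)
    (hj : j ∈ A) :
    censored (fun a b : ↥A => censored P A a b) {x : ↥A | ↑x ∈ F} ⟨i, hi⟩ ⟨j, hj⟩ =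
      censored P F i j := by
  classical
  have hrange : Set.range (Subtype.val ∘ Subtype.val : ↥{x : ↥A | ↑x ∈ F}ᶜ → α) = A \ F := by
    ext x
    simp [and_comm]
  calc _ = ∑' L : {L : List α // ∀ x ∈ L, x ∈ A \ F}, pathWeight (censored P A) i L j := by
        rw [censored_eq_tsum_list, ← hrange, ← tsum_list_map_of_injective
          (Subtype.val_injective.comp Subtype.val_injective) (fun l => pathWeight _ i l j)]
        simp_rw [pathWeight_comp, List.map_map]
    _ = ∑' L : {L : List α // ∀ x ∈ L, x ∈ A \ F},
          ∑' l : {l : List α // l.filter (· ∈ A) = L}, pathWeight P i l j :=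
        tsum_congr fun L => (tsum_filter_fiber A P i j L fun x hx => (L.2 x hx).1).symm
    _ = censored P F i j := by
      rw [censored_eq_tsum_avoiding, ← (sigmaFilterFiberEquiv hFA).tsum_eq, ENNReal.tsum_sigma']
      rfl

end Transitivity

theorem rMeasure_censored (P : α → α → ℝ≥0∞) {A F : Set α} (hFA : F ⊆ A) {i j : α}
    (hi : i ∈ A) (hj : j ∈ A) :
    rMeasure (fun a b : ↥A => censored P A a b) {x : ↥A | ↑x ∈ F} ⟨i, hi⟩ ⟨j, hj⟩ =
      rMeasure P F i j := by
  simp only [rMeasure, censored_censored P hFA]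
  congr 1
  simp

theorem rMeasure_invariant_general (P : ℕ → ℕ → ℝ≥0∞)
    (n i j : ℕ) (h1 : 1 ≤ i) (hij : i ≤ j) (hjn : j ≤ n) :
    rMeasure (fun a b : ↥(Set.Icc 1 n) => censored P (Set.Icc 1 n) ↑a ↑b)
        {x : ↥(Set.Icc 1 n) | ↑x ∈ Set.Icc 1 j}
        ⟨i, ⟨h1, hij.trans hjn⟩⟩ ⟨j, ⟨h1.trans hij, hjn⟩⟩ =
      rMeasure P (Set.Icc 1 j) i j :=
  rMeasure_censored P (Set.Icc_subset_Icc le_rfl hjn) _ _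

/-- Invariance of the R-measure under censoring: for `1 ≤ i ≤ j ≤ n`, the R-measure
computed from the censored chain `P^{E_n}` (censoring it further to `E_j`) agrees with
the R-measure of `P`. -/
theorem rMeasure_invariant (P : ℕ → ℕ → ℝ≥0∞) (hP : RowStoch P)
    (n i j : ℕ) (h1 : 1 ≤ i) (hij : i ≤ j) (hjn : j ≤ n) :
    rMeasure (fun a b : ↥(Set.Icc 1 n) => censored P (Set.Icc 1 n) ↑a ↑b)
        {x : ↥(Set.Icc 1 n) | ↑x ∈ Set.Icc 1 j}
        ⟨i, ⟨h1, hij.trans hjn⟩⟩ ⟨j, ⟨h1.trans hij, hjn⟩⟩ =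
      rMeasure P (Set.Icc 1 j) i j :=
  rMeasure_invariant_general P n i j h1 hij hjn
end
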